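/- Let S be a distributive join-semilattice with zero that is representable, i.e., isomorphic to the join-semilattice Conc L of compact congruences of some lattice L. Then there exists a lattice K such that Conc K is isomorphic to S and every compact congruence of K is principal (Princ K = Conc K). -/

import Mathlib

universe u v

/-- The compactness notion of Mathlib (Dec 2024), restored with its old definition. -/
def CompleteLattice.IsCompactElement {α : Type*} [CompleteLattice α] (k : α) :=
  ∀ s : Set α, k ≤ sSup s → ∃ t : Finset α, ↑t ⊆ s ∧ k ≤ t.sup id

/-- A congruence of a lattice: an equivalence relation compatible with join and meet. -/
structure LatticeCon' (L : Type u) [Lattice L] extends Setoid L where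
  sup_comp : ∀ {a b c d : L}, r a b → r c d → r (a ⊔ c) (b ⊔ d)
  inf_comp : ∀ {a b c d : L}, r a b → r c d → r (a ⊓ c) (b ⊓ d)

namespace LatticeCon'

variable {L : Type u} [Lattice L]

theorem ext' {c d : LatticeCon' L} (h : ∀ a b, c.r a b ↔ d.r a b) : c = d := by
  obtain ⟨cs, _, _⟩ := c
  obtain ⟨ds, _, _⟩ := d
  congr 1
  exact Setoid.ext h

/-- Congruences are ordered by inclusion of the underlying relations. -/
instance : PartialOrder (LatticeCon' L) where
  le c d := ∀ ⦃a b : L⦄, c.r a b → d.r a b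
  le_refl c a b h := h
  le_trans c d e h1 h2 a b h := h2 (h1 h)
  le_antisymm c d h1 h2 := ext' fun a b => ⟨fun h => h1 h, fun h => h2 h⟩

instance : InfSet (LatticeCon' L) where
  sInf S :=
    { r := fun a b => ∀ c ∈ S, c.r a b
      iseqv := ⟨fun a c _ => c.iseqv.refl a,
        fun h c hc => c.iseqv.symm (h c hc),
        fun h1 h2 c hc => c.iseqv.trans (h1 c hc) (h2 c hc)⟩
      sup_comp := fun h1 h2 c hc => c.sup_comp (h1 c hc) (h2 c hc)
      inf_comp := fun h1 h2 c hc => c.inf_comp (h1 c hc) (h2 c hc) }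

/-- The congruence lattice `Con L`. -/
instance : CompleteLattice (LatticeCon' L) :=
  completeLatticeOfInf _ fun S =>
    ⟨fun c hc _ _ h => h c hc, fun c hc _ _ h d hd => hc hd h⟩

/-- A congruence is principal if it is the smallest congruence collapsing some pair. -/
def IsPrincipal (α : LatticeCon' L) : Prop :=
  ∃ a b : L, α.r a b ∧ ∀ β : LatticeCon' L, β.r a b → α ≤ β

/-- `Princ L`: the order of principal congruences of `L`. -/
abbrev Princ (L : Type u) [Lattice L] := {α : LatticeCon' L // α.IsPrincipal}

/-- `Conc L`: the compact congruences of `L`. -/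
abbrev Conc (L : Type u) [Lattice L] := {α : LatticeCon' L // CompleteLattice.IsCompactElement α}

end LatticeCon'

/-!
Grätzer and Schmidt's lattice `M₃[B]` of Boolean triples contains `B` diagonally as a
congruence-preserving sublattice: a triple lying between `(p, p, p)` and `(q, q, q)` and its
diagonal coordinates `(x, x, x)`, `(y, y, y)`, `(z, z, z)` are lattice polynomials of each other
(with constants built from `p` and `q`), so every congruence of `M₃[B]` is the componentwise
extension of its restriction to `B`. Under this correspondence `con(a, b) ∨ con(c, d)` extends
to the principal congruence `con((a, c, a ∧ c), (b, d, b ∧ d))`.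

Iterating `B ↦ M₃[B]` and passing to the direct limit `K` of `L → M₃[L] → M₃[M₃[L]] → ⋯`
gives a congruence-preserving extension of `L`, so `Con K ≅ Con L` and hence `Conc K ≅ Conc L`.
Two principal congruences of `K` are extensions of principal congruences of a common stage, whose
join extends to a principal congruence of the next stage; so joins of principal congruences of
`K` are principal, and hence so are its compact congruences, being finite such joins.
An empty `L` is replaced by a one-element lattice.
-/

namespace LatticeCon'

variable {A B C : Type*} [Lattice A] [Lattice B] [Lattice C]

protected lemma refl (c : LatticeCon' A) (a : A) : c.r a a := c.iseqv.refl a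

protected lemma symm (c : LatticeCon' A) {a b : A} (h : c.r a b) : c.r b a := c.iseqv.symm h

protected lemma trans (c : LatticeCon' A) {a b d : A} (h : c.r a b) (h' : c.r b d) : c.r a d :=
  c.iseqv.trans h h'

lemma sup_right (c : LatticeCon' A) {a b : A} (h : c.r a b) (x : A) : c.r (a ⊔ x) (b ⊔ x) :=
  c.sup_comp h (c.refl x)

lemma inf_right (c : LatticeCon' A) {a b : A} (h : c.r a b) (x : A) : c.r (a ⊓ x) (b ⊓ x) :=
  c.inf_comp h (c.refl x)

lemma sInf_r {S : Set (LatticeCon' A)} {a b : A} : (sInf S).r a b ↔ ∀ c ∈ S, c.r a b := Iff.rfl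

lemma inf_r {c d : LatticeCon' A} {a b : A} : (c ⊓ d).r a b ↔ c.r a b ∧ d.r a b := by
  rw [← sInf_pair, sInf_r]
  simp

instance instSubsingleton [Subsingleton A] : Subsingleton (LatticeCon' A) :=
  ⟨fun c d => ext' fun a b => by
    rw [Subsingleton.elim a b]
    exact iff_of_true (c.refl b) (d.refl b)⟩

def principal (a b : A) : LatticeCon' A := sInf {c | c.r a b}

lemma principal_r (a b : A) : (principal a b).r a b := fun _ hc => hc

lemma principal_le_iff {a b : A} {c : LatticeCon' A} : principal a b ≤ c ↔ c.r a b :=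
  ⟨fun h => h (principal_r a b), fun h _ _ hxy => hxy c h⟩

lemma isPrincipal_iff {α : LatticeCon' A} : α.IsPrincipal ↔ ∃ a b, α = principal a b := by
  refine ⟨fun ⟨a, b, hab, hmin⟩ => ⟨a, b, le_antisymm (hmin _ (principal_r a b))
    (principal_le_iff.2 hab)⟩, ?_⟩
  rintro ⟨a, b, rfl⟩
  exact ⟨a, b, principal_r a b, fun _ => principal_le_iff.2⟩

lemma isPrincipal_principal (a b : A) : (principal a b).IsPrincipal :=
  isPrincipal_iff.2 ⟨a, b, rfl⟩

lemma principal_self (a : A) : principal a a = ⊥ :=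
  le_bot_iff.1 (principal_le_iff.2 (LatticeCon'.refl _ a))

def directedUnion (s : Set (LatticeCon' A)) (hne : s.Nonempty) (hd : DirectedOn (· ≤ ·) s) :
    LatticeCon' A where
  r a b := ∃ c ∈ s, c.r a b
  iseqv := by
    refine ⟨fun a => ⟨hne.some, hne.some_mem, LatticeCon'.refl _ a⟩,
      fun ⟨c, hc, h⟩ => ⟨c, hc, c.symm h⟩, fun ⟨c, hc, h⟩ ⟨d, hd', h'⟩ => ?_⟩
    obtain ⟨e, he, hce, hde⟩ := hd c hc d hd'
    exact ⟨e, he, e.trans (hce h) (hde h')⟩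
  sup_comp := fun ⟨c, hc, h⟩ ⟨d, hd', h'⟩ => by
    obtain ⟨e, he, hce, hde⟩ := hd c hc d hd'
    exact ⟨e, he, e.sup_comp (hce h) (hde h')⟩
  inf_comp := fun ⟨c, hc, h⟩ ⟨d, hd', h'⟩ => by
    obtain ⟨e, he, hce, hde⟩ := hd c hc d hd'
    exact ⟨e, he, e.inf_comp (hce h) (hde h')⟩

lemma exists_r_of_sSup_r {s : Set (LatticeCon' A)} (hne : s.Nonempty) (hd : DirectedOn (· ≤ ·) s)
    {a b : A} (h : (sSup s).r a b) : ∃ c ∈ s, c.r a b :=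
  (sSup_le (a := directedUnion s hne hd) fun c hc _ _ hxy => ⟨c, hc, hxy⟩) h

lemma isCompactElement_of_isPrincipal {α : LatticeCon' A} (h : α.IsPrincipal) :
    CompleteLattice.IsCompactElement α := by
  obtain ⟨a, b, rfl⟩ := isPrincipal_iff.1 h
  refine (CompleteLattice.isCompactElement_iff_exists_le_sSup_of_le_sSup (k := _)).1 ?_
  refine (CompleteLattice.isCompactElement_iff_le_of_directed_sSup_le (k := _)).2
    fun s hne hd hle => ?_
  obtain ⟨c, hc, hab⟩ := exists_r_of_sSup_r hne hd (hle (principal_r a b))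
  exact ⟨c, hc, principal_le_iff.2 hab⟩

lemma eq_sSup_principal (α : LatticeCon' A) :
    α = sSup {γ | ∃ a b, α.r a b ∧ γ = principal a b} :=
  le_antisymm (fun a b hab => le_sSup (s := {γ | ∃ a b, α.r a b ∧ γ = principal a b})
      ⟨a, b, hab, rfl⟩ (principal_r a b))
    (sSup_le fun _ ⟨_, _, hab, hγ⟩ => hγ ▸ principal_le_iff.2 hab)

lemma isPrincipal_of_isCompactElement [Nonempty A]
    (hsup : ∀ α β : LatticeCon' A, α.IsPrincipal → β.IsPrincipal → (α ⊔ β).IsPrincipal)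
    {α : LatticeCon' A} (hα : CompleteLattice.IsCompactElement α) : α.IsPrincipal := by
  obtain ⟨t, hts, hle⟩ := hα _ (eq_sSup_principal α).le
  have hprinc : ∀ γ ∈ t, γ.IsPrincipal := fun γ hγ => by
    obtain ⟨a, b, -, rfl⟩ := hts hγ
    exact isPrincipal_principal a b
  have hge : t.sup id ≤ α := Finset.sup_le fun γ hγ => by
    obtain ⟨a, b, hab, rfl⟩ := hts hγ
    exact principal_le_iff.2 hab
  have hbot : (⊥ : LatticeCon' A).IsPrincipal :=
    principal_self (Classical.arbitrary A) ▸ isPrincipal_principal _ _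
  exact le_antisymm hle hge ▸ Finset.sup_induction hbot (fun β hβ γ hγ => hsup β γ hβ hγ) hprinc

def comap (f : LatticeHom A B) (Θ : LatticeCon' B) : LatticeCon' A where
  r a b := Θ.r (f a) (f b)
  iseqv := ⟨fun _ => Θ.refl _, Θ.symm, Θ.trans⟩
  sup_comp h h' := by simpa only [map_sup] using Θ.sup_comp h h'
  inf_comp h h' := by simpa only [map_inf] using Θ.inf_comp h h'

@[simp] lemma comap_r {f : LatticeHom A B} {Θ : LatticeCon' B} {a b : A} :
    (comap f Θ).r a b ↔ Θ.r (f a) (f b) := Iff.rfl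

lemma comap_comp (g : LatticeHom B C) (f : LatticeHom A B) (Θ : LatticeCon' C) :
    comap (g.comp f) Θ = comap f (comap g Θ) := rfl

lemma comap_inf (f : LatticeHom A B) (Θ Θ' : LatticeCon' B) :
    comap f (Θ ⊓ Θ') = comap f Θ ⊓ comap f Θ' :=
  ext' fun _ _ => by simp only [comap_r, inf_r]

end LatticeCon'

open LatticeCon'

namespace LatticeHom

variable {A B C : Type*} [Lattice A] [Lattice B] [Lattice C]

/-- For an embedding `f`, this says that `B` is a congruence-preserving extension of `A`. -/
def IsCongruencePreserving (f : LatticeHom A B) : Prop := Function.Bijective (comap f)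

lemma isCongruencePreserving_id : (LatticeHom.id A).IsCongruencePreserving :=
  Function.bijective_id

namespace IsCongruencePreserving

variable {f : LatticeHom A B} {g : LatticeHom B C}

protected lemma bijective (hf : f.IsCongruencePreserving) : Function.Bijective (comap f) := hf

lemma comp (hg : g.IsCongruencePreserving) (hf : f.IsCongruencePreserving) :
    (g.comp f).IsCongruencePreserving :=
  hf.bijective.comp hg.bijective

/-- A bijection preserving binary meets is an order isomorphism. -/
noncomputable def comapOrderIso (hf : f.IsCongruencePreserving) :
    LatticeCon' B ≃o LatticeCon' A where
  toEquiv := Equiv.ofBijective _ hf.bijective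
  map_rel_iff' {Θ Θ'} := by
    change comap f Θ ≤ comap f Θ' ↔ Θ ≤ Θ'
    rw [← inf_eq_left, ← inf_eq_left (b := Θ'), ← comap_inf, hf.bijective.injective.eq_iff]

@[simp] lemma comapOrderIso_apply (hf : f.IsCongruencePreserving) (Θ : LatticeCon' B) :
    hf.comapOrderIso Θ = comap f Θ := rfl

lemma comapOrderIso_symm_principal (hf : f.IsCongruencePreserving) (a b : A) :
    hf.comapOrderIso.symm (principal a b) = principal (f a) (f b) :=
  eq_of_forall_ge_iff fun Θ => by
    rw [← hf.comapOrderIso.le_iff_le, OrderIso.apply_symm_apply, comapOrderIso_apply,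
      principal_le_iff, principal_le_iff, comap_r]

lemma isPrincipal_comapOrderIso_symm (hf : f.IsCongruencePreserving) {α : LatticeCon' A}
    (hα : α.IsPrincipal) : (hf.comapOrderIso.symm α).IsPrincipal := by
  obtain ⟨a, b, rfl⟩ := isPrincipal_iff.1 hα
  rw [comapOrderIso_symm_principal]
  exact isPrincipal_principal _ _

lemma comapOrderIso_symm_of_comp_eq {h : LatticeHom A C} (hh : h.IsCongruencePreserving)
    (hg : g.IsCongruencePreserving) (hf : f.IsCongruencePreserving) (e : g.comp f = h)
    (α : LatticeCon' A) :
    hh.comapOrderIso.symm α = hg.comapOrderIso.symm (hf.comapOrderIso.symm α) := by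
  subst e
  rw [OrderIso.symm_apply_eq, comapOrderIso_apply, comap_comp, ← comapOrderIso_apply hg,
    OrderIso.apply_symm_apply, ← comapOrderIso_apply hf, OrderIso.apply_symm_apply]

end IsCongruencePreserving

end LatticeHom

section CompactElements

variable {X Y : Type*} [CompleteLattice X] [CompleteLattice Y]

lemma OrderIso.isCompactElement_apply (e : X ≃o Y) {x : X}
    (hx : CompleteLattice.IsCompactElement x) : CompleteLattice.IsCompactElement (e x) := by
  refine (CompleteLattice.isCompactElement_iff_exists_le_sSup_of_le_sSup (k := e x)).1 ?_
  intro s u hne hd hlub hle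
  obtain ⟨_, ⟨y, hy, rfl⟩, hxy⟩ :=
    (CompleteLattice.isCompactElement_iff_exists_le_sSup_of_le_sSup (k := x)).2 hx
      (e.symm '' s) (e.symm u) (hne.image _)
      (directedOn_image.2 (hd.mono' fun _ _ _ _ h => e.symm.monotone h))
      (e.symm.isLUB_image'.2 hlub) (e.le_symm_apply.2 hle)
  exact ⟨y, hy, e.le_symm_apply.1 hxy⟩

def OrderIso.compactElements (e : X ≃o Y) :
    {x : X // CompleteLattice.IsCompactElement x} ≃o
      {y : Y // CompleteLattice.IsCompactElement y} where
  toEquiv := e.toEquiv.subtypeEquiv fun _ =>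
    ⟨e.isCompactElement_apply, fun h => by simpa using e.symm.isCompactElement_apply h⟩
  map_rel_iff' := e.le_iff_le

end CompactElements

namespace M3

variable {B : Type*} [Lattice B]

/-- Grätzer–Schmidt's Boolean triples are the fixed points of this closure operator. -/
def closure (t : B × B × B) : B × B × B :=
  ((t.1 ⊔ t.2.1) ⊓ (t.1 ⊔ t.2.2), (t.2.1 ⊔ t.1) ⊓ (t.2.1 ⊔ t.2.2),
    (t.2.2 ⊔ t.1) ⊓ (t.2.2 ⊔ t.2.1))

lemma le_closure (t : B × B × B) : t ≤ closure t :=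
  ⟨le_inf le_sup_left le_sup_left, le_inf le_sup_left le_sup_left, le_inf le_sup_left le_sup_left⟩

lemma closure_mono {t s : B × B × B} (h : t ≤ s) : closure t ≤ closure s :=
  ⟨inf_le_inf (sup_le_sup h.1 h.2.1) (sup_le_sup h.1 h.2.2),
    inf_le_inf (sup_le_sup h.2.1 h.1) (sup_le_sup h.2.1 h.2.2),
    inf_le_inf (sup_le_sup h.2.2 h.1) (sup_le_sup h.2.2 h.2.1)⟩

lemma closure_closure (t : B × B × B) : closure (closure t) = closure t := by
  refine le_antisymm ?_ (le_closure _)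
  simp only [closure]
  refine ⟨inf_le_inf ?_ ?_, inf_le_inf ?_ ?_, inf_le_inf ?_ ?_⟩ <;> refine sup_le ?_ ?_ <;>
  first
  | exact inf_le_left.trans le_rfl | exact inf_le_right.trans le_rfl
  | exact inf_le_left.trans (sup_comm _ _).le | exact inf_le_right.trans (sup_comm _ _).le

end M3

variable (B : Type*) [Lattice B] in
def M3 : Type _ := {t : B × B × B // M3.closure t = t}

namespace M3

variable {B : Type*} [Lattice B]

instance : PartialOrder (M3 B) := Subtype.partialOrder _

lemma le_iff {T S : M3 B} : T ≤ S ↔ T.1 ≤ S.1 := Iff.rfl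

instance : Lattice (M3 B) where
  sup T S := ⟨closure (T.1 ⊔ S.1), closure_closure _⟩
  le_sup_left _ _ := le_iff.2 (le_sup_left.trans (le_closure _))
  le_sup_right _ _ := le_iff.2 (le_sup_right.trans (le_closure _))
  sup_le _ _ U hT hS := le_iff.2 (U.2 ▸ closure_mono (sup_le hT hS))
  inf T S := ⟨T.1 ⊓ S.1, le_antisymm (le_inf
    ((closure_mono inf_le_left).trans_eq T.2) ((closure_mono inf_le_right).trans_eq S.2))
    (le_closure _)⟩
  inf_le_left _ _ := le_iff.2 inf_le_left
  inf_le_right _ _ := le_iff.2 inf_le_right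
  le_inf _ _ _ hS hU := le_iff.2 (le_inf hS hU)

lemma sup_val (T S : M3 B) : (T ⊔ S).1 = closure (T.1 ⊔ S.1) := rfl

lemma inf_val (T S : M3 B) : (T ⊓ S).1 = T.1 ⊓ S.1 := rfl

def ofTriple (t : B × B × B) : M3 B := ⟨closure t, closure_closure t⟩

lemma ofTriple_val (t : B × B × B) : (ofTriple t).1 = closure t := rfl

lemma closure_pair (a c : B) : closure (a, c, a ⊓ c) = (a, c, a ⊓ c) := by
  simp [closure, sup_of_le_left, sup_of_le_right, inf_of_le_right]

def diag : LatticeHom B (M3 B) where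
  toFun a := ⟨(a, a, a), by simp [closure]⟩
  map_sup' a b := Subtype.ext <| by
    change _ = closure _
    simp [closure]
  map_inf' _ _ := rfl

lemma diag_val (a : B) : (diag a).1 = (a, a, a) := rfl

lemma exists_diag_le_le (T S : M3 B) :
    ∃ p q : B, diag p ≤ T ∧ diag p ≤ S ∧ T ≤ diag q ∧ S ≤ diag q := by
  have lo : ∀ U : M3 B, diag (U.1.1 ⊓ U.1.2.1 ⊓ U.1.2.2) ≤ U := fun U =>
    ⟨inf_le_left.trans inf_le_left, inf_le_left.trans inf_le_right, inf_le_right⟩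
  have hi : ∀ U : M3 B, U ≤ diag (U.1.1 ⊔ U.1.2.1 ⊔ U.1.2.2) := fun U =>
    ⟨le_sup_left.trans le_sup_left, le_sup_right.trans le_sup_left, le_sup_right⟩
  exact ⟨_, _, (OrderHomClass.mono diag inf_le_left).trans (lo T),
    (OrderHomClass.mono diag inf_le_right).trans (lo S),
    (hi T).trans (OrderHomClass.mono diag le_sup_left),
    (hi S).trans (OrderHomClass.mono diag le_sup_right)⟩

section Polynomials

/-! For `diag p ≤ T ≤ diag q`, the triples `(q, p, p)`, `(p, q, p)`, `(p, p, q)` cut out the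
coordinates of `T`, and joining with them moves a coordinate to another position. -/

variable {p q : B} {T : M3 B}

lemma inf_sup_eq_diag_fst (hp : diag p ≤ T) (hq : T ≤ diag q) :
    T ⊓ ofTriple (q, p, p) ⊔ ((T ⊓ ofTriple (q, p, p) ⊔ ofTriple (p, p, q)) ⊓ ofTriple (p, q, p)) =
      diag T.1.1 := by
  obtain ⟨hpx, hpy, hpz⟩ : p ≤ T.1.1 ∧ p ≤ T.1.2.1 ∧ p ≤ T.1.2.2 := hp
  obtain ⟨hxq, hyq, hzq⟩ : T.1.1 ≤ q ∧ T.1.2.1 ≤ q ∧ T.1.2.2 ≤ q := hq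
  have hpq := hpx.trans hxq
  apply Subtype.ext
  simp only [inf_val, sup_val, ofTriple_val, diag_val]
  simp [closure, *, sup_of_le_left, sup_of_le_right, inf_of_le_left, inf_of_le_right]

lemma inf_sup_eq_diag_snd (hp : diag p ≤ T) (hq : T ≤ diag q) :
    T ⊓ ofTriple (p, q, p) ⊔ ((T ⊓ ofTriple (p, q, p) ⊔ ofTriple (p, p, q)) ⊓ ofTriple (q, p, p)) =
      diag T.1.2.1 := by
  obtain ⟨hpx, hpy, hpz⟩ : p ≤ T.1.1 ∧ p ≤ T.1.2.1 ∧ p ≤ T.1.2.2 := hp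
  obtain ⟨hxq, hyq, hzq⟩ : T.1.1 ≤ q ∧ T.1.2.1 ≤ q ∧ T.1.2.2 ≤ q := hq
  have hpq := hpx.trans hxq
  apply Subtype.ext
  simp only [inf_val, sup_val, ofTriple_val, diag_val]
  simp [closure, *, sup_of_le_left, sup_of_le_right, inf_of_le_left, inf_of_le_right]

lemma inf_sup_eq_diag_thd (hp : diag p ≤ T) (hq : T ≤ diag q) :
    T ⊓ ofTriple (p, p, q) ⊔ ((T ⊓ ofTriple (p, p, q) ⊔ ofTriple (p, q, p)) ⊓ ofTriple (q, p, p)) =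
      diag T.1.2.2 := by
  obtain ⟨hpx, hpy, hpz⟩ : p ≤ T.1.1 ∧ p ≤ T.1.2.1 ∧ p ≤ T.1.2.2 := hp
  obtain ⟨hxq, hyq, hzq⟩ : T.1.1 ≤ q ∧ T.1.2.1 ≤ q ∧ T.1.2.2 ≤ q := hq
  have hpq := hpx.trans hxq
  apply Subtype.ext
  simp only [inf_val, sup_val, ofTriple_val, diag_val]
  simp [closure, *, sup_of_le_left, sup_of_le_right, inf_of_le_left, inf_of_le_right]

lemma diag_inf_sup_eq (hp : diag p ≤ T) (hq : T ≤ diag q) :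
    diag T.1.1 ⊓ ofTriple (q, p, p) ⊔ diag T.1.2.1 ⊓ ofTriple (p, q, p) ⊔
      diag T.1.2.2 ⊓ ofTriple (p, p, q) = T := by
  obtain ⟨hpx, hpy, hpz⟩ : p ≤ T.1.1 ∧ p ≤ T.1.2.1 ∧ p ≤ T.1.2.2 := hp
  obtain ⟨hxq, hyq, hzq⟩ : T.1.1 ≤ q ∧ T.1.2.1 ≤ q ∧ T.1.2.2 ≤ q := hq
  have hpq := hpx.trans hxq
  have hT := T.2
  simp only [closure, Prod.ext_iff] at hT
  apply Subtype.ext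
  simp only [inf_val, sup_val, ofTriple_val, diag_val]
  have e₁ : T.1.1 ⊔ (T.1.1 ⊓ T.1.2.1 ⊔ T.1.2.2) = T.1.1 ⊔ T.1.2.2 := by
    rw [← sup_assoc, sup_inf_self]
  have e₂ : T.1.2.1 ⊔ (T.1.1 ⊓ T.1.2.1 ⊔ T.1.2.2) = T.1.2.1 ⊔ T.1.2.2 := by
    rw [← sup_assoc, inf_comm, sup_inf_self]
  have e₃ : T.1.1 ⊓ T.1.2.1 ⊔ T.1.2.2 ⊔ T.1.1 = T.1.2.2 ⊔ T.1.1 := by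
    rw [sup_comm, ← sup_assoc, sup_inf_self, sup_comm]
  have e₄ : T.1.1 ⊓ T.1.2.1 ⊔ T.1.2.2 ⊔ T.1.2.1 = T.1.2.2 ⊔ T.1.2.1 := by
    rw [sup_comm, ← sup_assoc, inf_comm, sup_inf_self, sup_comm]
  simp [closure, *, sup_of_le_left, sup_of_le_right, inf_of_le_left, inf_of_le_right]

end Polynomials

lemma r_diag_of_r {Θ : LatticeCon' (M3 B)} {T S : M3 B} (h : Θ.r T S) :
    Θ.r (diag T.1.1) (diag S.1.1) ∧ Θ.r (diag T.1.2.1) (diag S.1.2.1) ∧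
      Θ.r (diag T.1.2.2) (diag S.1.2.2) := by
  obtain ⟨p, q, hpT, hpS, hTq, hSq⟩ := exists_diag_le_le T S
  refine ⟨?_, ?_, ?_⟩
  · have h₁ := Θ.inf_right h (ofTriple (q, p, p))
    have := Θ.sup_comp h₁ (Θ.inf_right (Θ.sup_right h₁ (ofTriple (p, p, q))) (ofTriple (p, q, p)))
    rwa [inf_sup_eq_diag_fst hpT hTq, inf_sup_eq_diag_fst hpS hSq] at this
  · have h₁ := Θ.inf_right h (ofTriple (p, q, p))
    have := Θ.sup_comp h₁ (Θ.inf_right (Θ.sup_right h₁ (ofTriple (p, p, q))) (ofTriple (q, p, p)))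
    rwa [inf_sup_eq_diag_snd hpT hTq, inf_sup_eq_diag_snd hpS hSq] at this
  · have h₁ := Θ.inf_right h (ofTriple (p, p, q))
    have := Θ.sup_comp h₁ (Θ.inf_right (Θ.sup_right h₁ (ofTriple (p, q, p))) (ofTriple (q, p, p)))
    rwa [inf_sup_eq_diag_thd hpT hTq, inf_sup_eq_diag_thd hpS hSq] at this

lemma r_of_r_diag {Θ : LatticeCon' (M3 B)} {T S : M3 B} (h₁ : Θ.r (diag T.1.1) (diag S.1.1))
    (h₂ : Θ.r (diag T.1.2.1) (diag S.1.2.1)) (h₃ : Θ.r (diag T.1.2.2) (diag S.1.2.2)) :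
    Θ.r T S := by
  obtain ⟨p, q, hpT, hpS, hTq, hSq⟩ := exists_diag_le_le T S
  have := Θ.sup_comp (Θ.sup_comp (Θ.inf_right h₁ (ofTriple (q, p, p)))
    (Θ.inf_right h₂ (ofTriple (p, q, p)))) (Θ.inf_right h₃ (ofTriple (p, p, q)))
  rwa [diag_inf_sup_eq hpT hTq, diag_inf_sup_eq hpS hSq] at this

def extendCon (θ : LatticeCon' B) : LatticeCon' (M3 B) where
  r T S := θ.r T.1.1 S.1.1 ∧ θ.r T.1.2.1 S.1.2.1 ∧ θ.r T.1.2.2 S.1.2.2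
  iseqv := ⟨fun _ => ⟨θ.refl _, θ.refl _, θ.refl _⟩,
    fun h => ⟨θ.symm h.1, θ.symm h.2.1, θ.symm h.2.2⟩,
    fun h h' => ⟨θ.trans h.1 h'.1, θ.trans h.2.1 h'.2.1, θ.trans h.2.2 h'.2.2⟩⟩
  sup_comp := by
    rintro T S T' S' ⟨h₁, h₂, h₃⟩ ⟨h₁', h₂', h₃'⟩
    have s₁ := θ.sup_comp h₁ h₁'
    have s₂ := θ.sup_comp h₂ h₂'
    have s₃ := θ.sup_comp h₃ h₃'
    exact ⟨θ.inf_comp (θ.sup_comp s₁ s₂) (θ.sup_comp s₁ s₃),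
      θ.inf_comp (θ.sup_comp s₂ s₁) (θ.sup_comp s₂ s₃),
      θ.inf_comp (θ.sup_comp s₃ s₁) (θ.sup_comp s₃ s₂)⟩
  inf_comp := fun ⟨h₁, h₂, h₃⟩ ⟨h₁', h₂', h₃'⟩ =>
    ⟨θ.inf_comp h₁ h₁', θ.inf_comp h₂ h₂', θ.inf_comp h₃ h₃'⟩

lemma extendCon_r {θ : LatticeCon' B} {T S : M3 B} :
    (extendCon θ).r T S ↔ θ.r T.1.1 S.1.1 ∧ θ.r T.1.2.1 S.1.2.1 ∧ θ.r T.1.2.2 S.1.2.2 := Iff.rfl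

lemma comap_diag_extendCon (θ : LatticeCon' B) : comap diag (extendCon θ) = θ :=
  ext' fun _ _ => ⟨fun h => h.1, fun h => ⟨h, h, h⟩⟩

lemma extendCon_comap_diag (Θ : LatticeCon' (M3 B)) : extendCon (comap diag Θ) = Θ :=
  ext' fun _ _ => ⟨fun ⟨h₁, h₂, h₃⟩ => r_of_r_diag h₁ h₂ h₃, r_diag_of_r⟩

lemma isCongruencePreserving_diag : (diag : LatticeHom B (M3 B)).IsCongruencePreserving :=
  Function.bijective_iff_has_inverse.2 ⟨extendCon, extendCon_comap_diag, comap_diag_extendCon⟩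

lemma comapOrderIso_diag_symm (θ : LatticeCon' B) :
    isCongruencePreserving_diag.comapOrderIso.symm θ = extendCon θ := by
  rw [OrderIso.symm_apply_eq, LatticeHom.IsCongruencePreserving.comapOrderIso_apply,
    comap_diag_extendCon]

lemma extendCon_principal_sup_principal (a b c d : B) :
    extendCon (principal a b ⊔ principal c d) =
      principal (ofTriple (a, c, a ⊓ c)) (ofTriple (b, d, b ⊓ d)) := by
  have hac : (ofTriple (a, c, a ⊓ c)).1 = (a, c, a ⊓ c) := closure_pair a c
  have hbd : (ofTriple (b, d, b ⊓ d)).1 = (b, d, b ⊓ d) := closure_pair b d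
  have hab : (principal a b ⊔ principal c d).r a b :=
    (le_sup_left : principal a b ≤ _) (principal_r a b)
  have hcd : (principal a b ⊔ principal c d).r c d :=
    (le_sup_right : principal c d ≤ _) (principal_r c d)
  refine le_antisymm ?_ (principal_le_iff.2 ?_)
  · rw [← comapOrderIso_diag_symm, OrderIso.symm_apply_le]
    have hdiag := r_diag_of_r (principal_r (ofTriple (a, c, a ⊓ c)) (ofTriple (b, d, b ⊓ d)))
    rw [hac, hbd] at hdiag
    exact sup_le (principal_le_iff.2 hdiag.1) (principal_le_iff.2 hdiag.2.1)
  · rw [extendCon_r, hac, hbd]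
    exact ⟨hab, hcd, LatticeCon'.inf_comp _ hab hcd⟩

lemma exists_isPrincipal_comap_diag_eq_sup {α β : LatticeCon' B} (hα : α.IsPrincipal)
    (hβ : β.IsPrincipal) : ∃ γ : LatticeCon' (M3 B), γ.IsPrincipal ∧ comap diag γ = α ⊔ β := by
  obtain ⟨a, b, rfl⟩ := isPrincipal_iff.1 hα
  obtain ⟨c, d, rfl⟩ := isPrincipal_iff.1 hβ
  exact ⟨_, isPrincipal_principal _ _, by
    rw [← extendCon_principal_sup_principal, comap_diag_extendCon]⟩

end M3

namespace DirectLimit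

variable {ι : Type*} [Preorder ι] {F : ι → Type*} [∀ i, Lattice (F i)]
  {f : ∀ i j, i ≤ j → LatticeHom (F i) (F j)} {i j k : ι}

section LiftCon

variable (hf : ∀ i j (h : i ≤ j), (f i j h).IsCongruencePreserving)

noncomputable def liftCon (h : i ≤ j) (θ : LatticeCon' (F i)) : LatticeCon' (F j) :=
  (hf i j h).comapOrderIso.symm θ

lemma comap_liftCon (h : i ≤ j) (θ : LatticeCon' (F i)) : comap (f i j h) (liftCon hf h θ) = θ :=
  (hf i j h).comapOrderIso.apply_symm_apply θ

variable [DirectedSystem F (f · · ·)]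

lemma comp_f (hij : i ≤ j) (hjk : j ≤ k) :
    (f j k hjk).comp (f i j hij) = f i k (hij.trans hjk) :=
  LatticeHom.ext fun a => DirectedSystem.map_map' f hij hjk a

lemma liftCon_r_f_iff (hij : i ≤ j) (hjk : j ≤ k) {θ : LatticeCon' (F i)} {a b : F j} :
    (liftCon hf (hij.trans hjk) θ).r (f j k hjk a) (f j k hjk b) ↔ (liftCon hf hij θ).r a b := by
  have : comap (f j k hjk) (liftCon hf (hij.trans hjk) θ) = liftCon hf hij θ := by
    apply (hf i j hij).bijective.injective
    rw [← comap_comp, comp_f, comap_liftCon, comap_liftCon]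
  rw [← this, comap_r]

end LiftCon

variable [IsDirectedOrder ι] [DirectedSystem F (f · · ·)]

noncomputable instance : Max (DirectLimit F f) :=
  ⟨map₂ f f f (fun _ => (· ⊔ ·)) fun _ _ _ => map_sup _⟩

noncomputable instance : Min (DirectLimit F f) :=
  ⟨map₂ f f f (fun _ => (· ⊓ ·)) fun _ _ _ => map_inf _⟩

lemma sup_def (i : ι) (a b : F i) :
    (⟦⟨i, a⟩⟧ ⊔ ⟦⟨i, b⟩⟧ : DirectLimit F f) = ⟦⟨i, a ⊔ b⟩⟧ :=
  map₂_def ..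

lemma inf_def (i : ι) (a b : F i) :
    (⟦⟨i, a⟩⟧ ⊓ ⟦⟨i, b⟩⟧ : DirectLimit F f) = ⟦⟨i, a ⊓ b⟩⟧ :=
  map₂_def ..

noncomputable instance : Lattice (DirectLimit F f) :=
  Lattice.mk'
    (DirectLimit.induction₂ _ fun _ _ _ => by simp_rw [sup_def, sup_comm])
    (DirectLimit.induction₃ _ fun _ _ _ _ => by simp_rw [sup_def, sup_assoc])
    (DirectLimit.induction₂ _ fun _ _ _ => by simp_rw [inf_def, inf_comm])
    (DirectLimit.induction₃ _ fun _ _ _ _ => by simp_rw [inf_def, inf_assoc])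
    (DirectLimit.induction₂ _ fun _ _ _ => by simp_rw [inf_def, sup_def, sup_inf_self])
    (DirectLimit.induction₂ _ fun _ _ _ => by simp_rw [sup_def, inf_def, inf_sup_self])

variable (f) in
noncomputable def of (i : ι) : LatticeHom (F i) (DirectLimit F f) where
  toFun a := ⟦⟨i, a⟩⟧
  map_sup' := (sup_def i · · |>.symm)
  map_inf' := (inf_def i · · |>.symm)

lemma of_f (h : i ≤ j) (a : F i) : of f j (f i j h a) = of f i a := mk_apply i j a h

lemma of_comp (i j : ι) (h : i ≤ j) : (of f j).comp (f i j h) = of f i :=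
  LatticeHom.ext fun a => of_f h a

lemma exists_eq_of₂ (x y : DirectLimit F f) (i : ι) :
    ∃ j, ∃ _ : i ≤ j, ∃ a b : F j, x = of f j a ∧ y = of f j b := by
  obtain ⟨k, a, b, rfl, rfl⟩ := exists_eq_mk₂ f x y
  obtain ⟨j, hij, hkj⟩ := exists_ge_ge i k
  exact ⟨j, hij, f k j hkj a, f k j hkj b, (mk_apply ..).symm, (mk_apply ..).symm⟩

lemma exists_f_eq_f_of_of_eq {a b : F j} {a' b' : F k} (ha : of f j a = of f k a')
    (hb : of f j b = of f k b') :
    ∃ l, ∃ h : j ≤ l, ∃ h' : k ≤ l, f j l h a = f k l h' a' ∧ f j l h b = f k l h' b' := by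
  obtain ⟨l₁, h₁, h₁', e₁⟩ := Quotient.exact ha
  obtain ⟨l₂, h₂, h₂', e₂⟩ := Quotient.exact hb
  obtain ⟨l, hl₁, hl₂⟩ := exists_ge_ge l₁ l₂
  refine ⟨l, h₁.trans hl₁, h₁'.trans hl₁, ?_, ?_⟩
  · rw [← DirectedSystem.map_map' f h₁ hl₁, ← DirectedSystem.map_map' f h₁' hl₁]
    exact congrArg _ e₁
  · rw [← DirectedSystem.map_map' f h₂ hl₂, ← DirectedSystem.map_map' f h₂' hl₂]
    exact congrArg _ e₂

section LimitCon

variable (hf : ∀ i j (h : i ≤ j), (f i j h).IsCongruencePreserving)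

lemma exists_liftCon_r_iff (h : i ≤ j) {θ : LatticeCon' (F i)} {a b : F j} :
    (∃ k, ∃ h' : i ≤ k, ∃ a' b', of f k a' = of f j a ∧ of f k b' = of f j b ∧
      (liftCon hf h' θ).r a' b') ↔ (liftCon hf h θ).r a b := by
  refine ⟨fun ⟨k, h', a', b', ha, hb, hr⟩ => ?_, fun hr => ⟨j, h, a, b, rfl, rfl, hr⟩⟩
  obtain ⟨l, hkl, hjl, ea, eb⟩ := exists_f_eq_f_of_of_eq ha hb
  rw [← liftCon_r_f_iff hf h hjl, ← ea, ← eb]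
  exact (liftCon_r_f_iff hf h' hkl).2 hr

noncomputable def limitCon (θ : LatticeCon' (F i)) : LatticeCon' (DirectLimit F f) where
  r x y := ∃ j, ∃ h : i ≤ j, ∃ a b, of f j a = x ∧ of f j b = y ∧ (liftCon hf h θ).r a b
  iseqv := by
    refine ⟨fun x => ?_,
      fun ⟨j, h, a, b, ha, hb, hr⟩ => ⟨j, h, b, a, hb, ha, LatticeCon'.symm _ hr⟩, ?_⟩
    · obtain ⟨j, h, a, -, rfl, -⟩ := exists_eq_of₂ x x i
      exact ⟨j, h, a, a, rfl, rfl, LatticeCon'.refl _ a⟩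
    · rintro - y - ⟨j₁, h₁, a₁, b₁, rfl, rfl, r₁⟩ ⟨j₂, h₂, a₂, b₂, hy, rfl, r₂⟩
      obtain ⟨k, hk₁, hk₂⟩ := exists_ge_ge j₁ j₂
      refine ⟨k, h₁.trans hk₁, f j₁ k hk₁ a₁, f j₂ k hk₂ b₂, of_f .., of_f .., ?_⟩
      refine LatticeCon'.trans _ ((liftCon_r_f_iff hf h₁ hk₁).2 r₁) ?_
      exact (exists_liftCon_r_iff hf _).1 ⟨j₂, h₂, a₂, b₂, by rw [hy, of_f], by rw [of_f], r₂⟩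
  sup_comp := by
    rintro - - - - ⟨j₁, h₁, a₁, b₁, rfl, rfl, r₁⟩ ⟨j₂, h₂, a₂, b₂, rfl, rfl, r₂⟩
    obtain ⟨k, hk₁, hk₂⟩ := exists_ge_ge j₁ j₂
    refine ⟨k, h₁.trans hk₁, f j₁ k hk₁ a₁ ⊔ f j₂ k hk₂ a₂, f j₁ k hk₁ b₁ ⊔ f j₂ k hk₂ b₂,
      by rw [map_sup, of_f, of_f], by rw [map_sup, of_f, of_f], LatticeCon'.sup_comp _
        ((liftCon_r_f_iff hf h₁ hk₁).2 r₁) ((liftCon_r_f_iff hf h₂ hk₂).2 r₂)⟩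
  inf_comp := by
    rintro - - - - ⟨j₁, h₁, a₁, b₁, rfl, rfl, r₁⟩ ⟨j₂, h₂, a₂, b₂, rfl, rfl, r₂⟩
    obtain ⟨k, hk₁, hk₂⟩ := exists_ge_ge j₁ j₂
    refine ⟨k, h₁.trans hk₁, f j₁ k hk₁ a₁ ⊓ f j₂ k hk₂ a₂, f j₁ k hk₁ b₁ ⊓ f j₂ k hk₂ b₂,
      by rw [map_inf, of_f, of_f], by rw [map_inf, of_f, of_f], LatticeCon'.inf_comp _
        ((liftCon_r_f_iff hf h₁ hk₁).2 r₁) ((liftCon_r_f_iff hf h₂ hk₂).2 r₂)⟩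

end LimitCon

theorem isCongruencePreserving_of (hf : ∀ i j (h : i ≤ j), (f i j h).IsCongruencePreserving)
    (i : ι) : (of f i).IsCongruencePreserving := by
  refine ⟨fun Θ Θ' hΘ => ext' fun x y => ?_, fun θ => ⟨limitCon hf θ, ext' fun a b => ?_⟩⟩
  · obtain ⟨j, h, a, b, rfl, rfl⟩ := exists_eq_of₂ x y i
    have : comap (of f j) Θ = comap (of f j) Θ' :=
      (hf i j h).bijective.injective (by rw [← comap_comp, ← comap_comp, of_comp, hΘ])
    rw [← comap_r, this, comap_r]
  · calc (limitCon hf θ).r (of f i a) (of f i b) ↔ (liftCon hf le_rfl θ).r a b :=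
          exists_liftCon_r_iff hf le_rfl
      _ ↔ (liftCon hf le_rfl θ).r (f i i le_rfl a) (f i i le_rfl b) := by
          rw [DirectedSystem.map_self', DirectedSystem.map_self']
      _ ↔ θ.r a b := by rw [← comap_r, comap_liftCon]

theorem isPrincipal_sup (hf : ∀ i j (h : i ≤ j), (f i j h).IsCongruencePreserving)
    (hsup : ∀ i (α β : LatticeCon' (F i)), α.IsPrincipal → β.IsPrincipal →
      ∃ j, ∃ h : i ≤ j, ∃ γ : LatticeCon' (F j), γ.IsPrincipal ∧ comap (f i j h) γ = α ⊔ β)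
    {α β : LatticeCon' (DirectLimit F f)} (hα : α.IsPrincipal) (hβ : β.IsPrincipal) :
    (α ⊔ β).IsPrincipal := by
  obtain ⟨x, y, rfl⟩ := isPrincipal_iff.1 hα
  obtain ⟨x', y', rfl⟩ := isPrincipal_iff.1 hβ
  obtain ⟨i, -⟩ := exists_eq_mk f x
  obtain ⟨j, -, a, b, rfl, rfl⟩ := exists_eq_of₂ x y i
  obtain ⟨k, hjk, c, d, rfl, rfl⟩ := exists_eq_of₂ x' y' j
  obtain ⟨l, hkl, γ, hγ, hγ_eq⟩ := hsup k _ _ (isPrincipal_principal (f j k hjk a) (f j k hjk b))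
    (isPrincipal_principal c d)
  have hk := isCongruencePreserving_of hf k
  rw [← of_f hjk a, ← of_f hjk b, ← hk.comapOrderIso_symm_principal,
    ← hk.comapOrderIso_symm_principal, ← map_sup,
    hk.comapOrderIso_symm_of_comp_eq (isCongruencePreserving_of hf l) (hf k l hkl)
      (of_comp k l hkl),
    ← hγ_eq, ← LatticeHom.IsCongruencePreserving.comapOrderIso_apply (hf k l hkl),
    OrderIso.symm_apply_apply]
  exact (isCongruencePreserving_of hf l).isPrincipal_comapOrderIso_symm hγ

end DirectLimit

open CategoryTheory

namespace Lat

instance directedSystem {ι : Type*} [Preorder ι] (G : ι ⥤ Lat) :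
    DirectedSystem (fun i => G.obj i) fun _ _ h => (G.map (homOfLE h)).hom where
  map_self i x := by simp
  map_map {_ _ _} hij hjk x := by
    rw [← ConcreteCategory.comp_apply, ← G.map_comp, homOfLE_comp]

lemma isCongruencePreserving_map_of_succ (G : ℕ ⥤ Lat)
    (hG : ∀ n : ℕ, (G.map (homOfLE n.le_succ)).hom.IsCongruencePreserving) {n m : ℕ}
    (h : n ≤ m) : (G.map (homOfLE h)).hom.IsCongruencePreserving := by
  induction m, h using Nat.le_induction with
  | base =>
    rw [Subsingleton.elim (homOfLE _) (𝟙 n), G.map_id]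
    exact LatticeHom.isCongruencePreserving_id
  | succ m hnm ih =>
    rw [← homOfLE_comp hnm m.le_succ, G.map_comp, Lat.hom_comp]
    exact (hG m).comp ih

end Lat

namespace M3

def iterate (L : Lat.{u}) : ℕ → Lat.{u}
  | 0 => L
  | n + 1 => Lat.of (M3 (iterate L n))

def tower (L : Lat) : ℕ ⥤ Lat :=
  Functor.ofSequence fun n => (Lat.ofHom diag : iterate L n ⟶ iterate L (n + 1))

lemma tower_map_succ (L : Lat) (n : ℕ) : ((tower L).map (homOfLE n.le_succ)).hom = diag :=
  congrArg Lat.Hom.hom (Functor.ofSequence_map_homOfLE_succ _ n)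

abbrev limit (L : Lat) : Type _ :=
  DirectLimit (fun n => (tower L).obj n) fun _ _ h => ((tower L).map (homOfLE h)).hom

lemma isCongruencePreserving_tower_map (L : Lat) {n m : ℕ} (h : n ≤ m) :
    ((tower L).map (homOfLE h)).hom.IsCongruencePreserving :=
  Lat.isCongruencePreserving_map_of_succ _
    (fun n => tower_map_succ L n ▸ isCongruencePreserving_diag) h

lemma isPrincipal_sup_limit (L : Lat) {α β : LatticeCon' (limit L)} (hα : α.IsPrincipal)
    (hβ : β.IsPrincipal) : (α ⊔ β).IsPrincipal := by
  refine DirectLimit.isPrincipal_sup (fun _ _ => isCongruencePreserving_tower_map L)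
    (fun n _ _ hα hβ => ⟨n + 1, n.le_succ, ?_⟩) hα hβ
  rw [tower_map_succ]
  exact exists_isPrincipal_comap_diag_eq_sup hα hβ

end M3

theorem LatticeCon'.exists_orderIso_and_isPrincipal_eq_isCompactElement (L : Type v)
    [Lattice L] :
    ∃ (K : Type v) (_ : Lattice K), Nonempty (LatticeCon' L ≃o LatticeCon' K) ∧
      {γ : LatticeCon' K | γ.IsPrincipal} = {γ | CompleteLattice.IsCompactElement γ} := by
  rcases isEmpty_or_nonempty L with hL | hL
  · refine ⟨PUnit, inferInstance,
      ⟨@OrderIso.ofUnique _ _ (uniqueOfSubsingleton ⊥) (uniqueOfSubsingleton ⊥) _ _⟩, ?_⟩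
    ext γ
    exact ⟨isCompactElement_of_isPrincipal,
      fun _ => Subsingleton.elim (principal PUnit.unit PUnit.unit) γ ▸ isPrincipal_principal _ _⟩
  · have hK := DirectLimit.isCongruencePreserving_of
      (fun _ _ => M3.isCongruencePreserving_tower_map (Lat.of L)) 0
    have : Nonempty (M3.limit (Lat.of L)) := ⟨DirectLimit.of _ 0 (Classical.arbitrary L)⟩
    refine ⟨M3.limit (Lat.of L), inferInstance, ⟨hK.comapOrderIso.symm⟩, ?_⟩
    ext γ
    exact ⟨isCompactElement_of_isPrincipal,
      isPrincipal_of_isCompactElement fun _ _ => M3.isPrincipal_sup_limit _⟩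

theorem representable_semilattice_with_principal_eq_compact_general
    (S : Type u) [SemilatticeSup S]
    (L : Type v) [Lattice L] (hrep : Nonempty (S ≃o LatticeCon'.Conc L)) :
    ∃ (K : Type v) (_ : Lattice K),
      Nonempty (S ≃o LatticeCon'.Conc K) ∧
      {γ : LatticeCon' K | γ.IsPrincipal} =
        {γ : LatticeCon' K | CompleteLattice.IsCompactElement γ} := by
  obtain ⟨e⟩ := hrep
  obtain ⟨K, _, ⟨φ⟩, hK⟩ := LatticeCon'.exists_orderIso_and_isPrincipal_eq_isCompactElement L
  exact ⟨K, _, ⟨e.trans φ.compactElements⟩, hK⟩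

/-- **Theorem.** If a distributive join-semilattice `S` with zero is representable,
i.e. `S ≅ Conc L` for some lattice `L`, then `S ≅ Conc K` for a lattice `K` in which
every compact congruence is principal (`Princ K = Conc K`). -/
theorem representable_semilattice_with_principal_eq_compact
    (S : Type u) [SemilatticeSup S] [OrderBot S]
    (hdist : ∀ a b c : S, c ≤ a ⊔ b → ∃ a' b' : S, a' ≤ a ∧ b' ≤ b ∧ c = a' ⊔ b')
    (L : Type v) [Lattice L] (hrep : Nonempty (S ≃o LatticeCon'.Conc L)) :
    ∃ (K : Type v) (_ : Lattice K),
      Nonempty (S ≃o LatticeCon'.Conc K) ∧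
      {γ : LatticeCon' K | γ.IsPrincipal} =
        {γ : LatticeCon' K | CompleteLattice.IsCompactElement γ} :=
  representable_semilattice_with_principal_eq_compact_general S L hrep
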